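/- Let d ≥ 3 and λ < −2. Then I₂(d,λ) > 0; explicitly, ∫_{−1}^{1} (1−t)^{−λ/2} (d²/dt²)[(1−t²)^{2+(d−3)/2}] dt > 0, which by the Rodrigues formula (1−t²)^{(d−3)/2} P_{2,d}(t) = R_{2,d} (d²/dt²)(1−t²)^{2+(d−3)/2} with R_{2,d} > 0 gives I₂(d,λ) = |S^{d−2}| ∫_{−1}^{1} (1−t)^{−λ/2} P_{2,d}(t) (1−t²)^{(d−3)/2} dt > 0. In particular the bound H_λ(g) ≤ H_λ(μ_g 𝟏) of Proposition 2.2 fails for λ < −2. -/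

import Mathlib

/-!
Write `a = -λ/2 > 1` and `p = 2 + (d-3)/2 ≥ 2`. Integrating by parts twice, with all boundary
terms vanishing because `(1 - t²)^p` and its derivative vanish at `±1`, turns
`∫ (1 - t)^a ∂²(1 - t²)^p` into `a (a - 1) ∫ (1 - t)^(a-2) (1 - t²)^p > 0`.

For the failure of `H_λ(g) ≤ H_λ(μ_g 𝟏)`, take orthonormal `u, v` and the signed measure
`δ_u + δ_{-u} - δ_v - δ_{-v}` (a discretised `x₁² - x₂²`). It has total mass `0` and, since
`‖x - y‖² = 2 - 2⟪x, y⟫` on the sphere, energy `4·4^{s/2} - 8·2^{s/2} > 0` for the kernel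
`‖x - y‖^s`, `s = -λ > 2`. Spreading each point mass uniformly over a small ball changes the
energy only a little, since the kernel is continuous, so it gives a mean-zero `g` with
`H_λ(g) > 0 = H_λ(μ_g 𝟏)`.
-/

open MeasureTheory Metric Set
open scoped RealInnerProductSpace ENNReal

/-- The surface measure on the unit sphere `S^{n-1} ⊂ ℝ^n`. -/
noncomputable def sphereMeasure (n : ℕ) :
    Measure (Metric.sphere (0 : EuclideanSpace ℝ (Fin n)) 1) :=
  ((volume : Measure (EuclideanSpace ℝ (Fin n))).toSphere)

/-- The surface measure `|S^{n-1}|` of the unit sphere in `ℝ^n`. -/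
noncomputable def sphereArea (n : ℕ) : ℝ :=
  (sphereMeasure n Set.univ).toReal

/-- The functional `H_λ(g) = ∫∫ g(η₁) conj(g(η₂)) |η₁ − η₂|^{−λ} dη₁ dη₂` on the unit
sphere `S^{n-1} ⊂ ℝ^n` (it is real-valued, so we take the real part). -/
noncomputable def Hfun {n : ℕ} (lam : ℝ)
    (g : Metric.sphere (0 : EuclideanSpace ℝ (Fin n)) 1 → ℂ) : ℝ :=
  (∫ p : Metric.sphere (0 : EuclideanSpace ℝ (Fin n)) 1 ×
        Metric.sphere (0 : EuclideanSpace ℝ (Fin n)) 1,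
      g p.1 * (starRingEnd ℂ) (g p.2) *
        ((‖(p.1 : EuclideanSpace ℝ (Fin n)) - (p.2 : EuclideanSpace ℝ (Fin n))‖ ^ (-lam) : ℝ) : ℂ)
    ∂((sphereMeasure n).prod (sphereMeasure n))).re

/-- The average value `μ_g` of `g` on the unit sphere `S^{n-1} ⊂ ℝ^n`. -/
noncomputable def sphereAvg {n : ℕ}
    (g : Metric.sphere (0 : EuclideanSpace ℝ (Fin n)) 1 → ℂ) : ℂ :=
  (∫ η, g η ∂(sphereMeasure n)) / ((sphereArea n : ℝ) : ℂ)

/-- The beta function `B(x,y) = ∫₀¹ t^{x−1} (1−t)^{y−1} dt`. -/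
noncomputable def betaFn (x y : ℝ) : ℝ :=
  ∫ t in (0 : ℝ)..1, t ^ (x - 1) * (1 - t) ^ (y - 1)

section Calculus

open intervalIntegral Topology

lemma continuous_one_sub_rpow {q : ℝ} (hq : 0 ≤ q) : Continuous fun t : ℝ => (1 - t) ^ q :=
  (continuous_const.sub continuous_id).rpow_const fun _ => Or.inr hq

lemma continuous_one_sub_sq_rpow {q : ℝ} (hq : 0 ≤ q) :
    Continuous fun t : ℝ => (1 - t ^ 2) ^ q :=
  (continuous_const.sub (continuous_pow 2)).rpow_const fun _ => Or.inr hq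

lemma hasDerivAt_one_sub_rpow (q : ℝ) {t : ℝ} (ht : t < 1) :
    HasDerivAt (fun s : ℝ => (1 - s) ^ q) (-(q * (1 - t) ^ (q - 1))) t := by
  convert ((hasDerivAt_id' t).const_sub 1).rpow_const (p := q) (Or.inl (sub_pos.2 ht).ne')
    using 1
  ring

lemma hasDerivAt_one_sub_sq_rpow (q : ℝ) {t : ℝ} (ht : t ∈ Ioo (-1 : ℝ) 1) :
    HasDerivAt (fun s : ℝ => (1 - s ^ 2) ^ q) (-(2 * q * t * (1 - t ^ 2) ^ (q - 1))) t := by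
  have hpos : 0 < 1 - t ^ 2 := by nlinarith [ht.1, ht.2]
  have := ((hasDerivAt_pow 2 t).const_sub 1).rpow_const (p := q) (Or.inl hpos.ne')
  convert this using 1
  push_cast
  ring

lemma hasDerivAt_deriv_one_sub_sq_rpow (p : ℝ) {t : ℝ} (ht : t ∈ Ioo (-1 : ℝ) 1) :
    HasDerivAt (fun s : ℝ => -(2 * p * s * (1 - s ^ 2) ^ (p - 1)))
      (-(2 * p * ((1 - t ^ 2) ^ (p - 1) + t * -(2 * (p - 1) * t * (1 - t ^ 2) ^ (p - 1 - 1)))))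
      t :=
  (((hasDerivAt_id' t).const_mul (2 * p)).fun_mul
    (hasDerivAt_one_sub_sq_rpow (p - 1) ht)).neg.congr_deriv (by ring)

lemma intervalIntegrable_one_sub_rpow {r : ℝ} (hr : -1 < r) (a b : ℝ) :
    IntervalIntegrable (fun t : ℝ => (1 - t) ^ r) volume a b := by
  simpa using (intervalIntegrable_rpow' hr (a := 1 - a) (b := 1 - b)).comp_sub_left 1

lemma iteratedDeriv_two_one_sub_sq_rpow (p : ℝ) {t : ℝ} (ht : t ∈ Ioo (-1 : ℝ) 1) :
    iteratedDeriv 2 (fun s : ℝ => (1 - s ^ 2) ^ p) t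
      = -(2 * p * ((1 - t ^ 2) ^ (p - 1) +
          t * -(2 * (p - 1) * t * (1 - t ^ 2) ^ (p - 1 - 1)))) := by
  have hderiv : deriv (fun s : ℝ => (1 - s ^ 2) ^ p)
      =ᶠ[𝓝 t] fun s => -(2 * p * s * (1 - s ^ 2) ^ (p - 1)) := by
    filter_upwards [isOpen_Ioo.mem_nhds ht] with s hs
    exact (hasDerivAt_one_sub_sq_rpow p hs).deriv
  rw [iteratedDeriv_succ, iteratedDeriv_one, hderiv.deriv_eq]
  exact (hasDerivAt_deriv_one_sub_sq_rpow p ht).deriv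

lemma integral_one_sub_rpow_mul_iteratedDeriv_two {a p : ℝ} (ha : 1 < a) (hp : 2 ≤ p) :
    ∫ t in (-1 : ℝ)..1, (1 - t) ^ a * iteratedDeriv 2 (fun s : ℝ => (1 - s ^ 2) ^ p) t
      = ∫ t in (-1 : ℝ)..1, a * (a - 1) * (1 - t) ^ (a - 2) * (1 - t ^ 2) ^ p := by
  have hIoo : ∀ t ∈ Ioo (min (-1 : ℝ) 1) (max (-1) 1), t ∈ Ioo (-1 : ℝ) 1 := by
    norm_num
  set u' : ℝ → ℝ := fun t => -(a * (1 - t) ^ (a - 1))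
  set w' : ℝ → ℝ := fun t => -(2 * p * t * (1 - t ^ 2) ^ (p - 1))
  set w'' : ℝ → ℝ := fun t =>
    -(2 * p * ((1 - t ^ 2) ^ (p - 1) + t * -(2 * (p - 1) * t * (1 - t ^ 2) ^ (p - 1 - 1))))
  have hu' : Continuous u' := (continuous_one_sub_rpow (by linarith)).const_mul a |>.neg
  have hw' : Continuous w' :=
    ((continuous_const.mul continuous_id).mul (continuous_one_sub_sq_rpow (by linarith))).neg
  have hw'' : Continuous w'' :=
    ((continuous_one_sub_sq_rpow (by linarith)).add (continuous_id.mul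
      (((continuous_const.mul continuous_id).mul
        (continuous_one_sub_sq_rpow (by linarith))).neg))).const_mul _ |>.neg
  have hu'' : IntervalIntegrable (fun t => -(a * -((a - 1) * (1 - t) ^ (a - 1 - 1))))
      volume (-1) 1 :=
    ((intervalIntegrable_one_sub_rpow (by linarith) _ _).const_mul (a - 1)).neg.const_mul a |>.neg
  have h₀ : ∫ t in (-1 : ℝ)..1, (1 - t) ^ a * iteratedDeriv 2 (fun s : ℝ => (1 - s ^ 2) ^ p) t
      = ∫ t in (-1 : ℝ)..1, (1 - t) ^ a * w'' t := by
    refine integral_congr_Ioo_of_le (by norm_num) fun t ht => ?_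
    rw [iteratedDeriv_two_one_sub_sq_rpow p ht]
  have h₁ := integral_mul_deriv_eq_deriv_mul_of_hasDerivAt
    (continuous_one_sub_rpow (by linarith : 0 ≤ a)).continuousOn hw'.continuousOn
    (fun t ht => hasDerivAt_one_sub_rpow a (hIoo t ht).2)
    (fun t ht => hasDerivAt_deriv_one_sub_sq_rpow p (hIoo t ht))
    (hu'.intervalIntegrable _ _) (hw''.intervalIntegrable _ _)
  have h₂ := integral_mul_deriv_eq_deriv_mul_of_hasDerivAt
    hu'.continuousOn (continuous_one_sub_sq_rpow (by linarith : 0 ≤ p)).continuousOn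
    (fun t ht => (hasDerivAt_one_sub_rpow (a - 1) (hIoo t ht).2).const_mul a |>.neg)
    (fun t ht => hasDerivAt_one_sub_sq_rpow p (hIoo t ht))
    hu'' (hw'.intervalIntegrable _ _)
  rw [h₀, h₁, h₂]
  have hp₀ : p ≠ 0 := by linarith
  have hp₁ : p - 1 ≠ 0 := by linarith
  simp only [u', w', sub_self, mul_one, one_pow, ne_eq, hp₀, hp₁, not_false_eq_true,
    Real.zero_rpow, mul_zero, neg_zero, sub_neg_eq_add, mul_neg, even_two, Even.neg_pow, neg_neg,
    zero_sub, zero_add]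
  simp only [show a - 1 - 1 = a - 2 by ring, mul_assoc]

lemma integral_one_sub_rpow_mul_iteratedDeriv_two_pos {a p : ℝ} (ha : 1 < a) (hp : 2 ≤ p) :
    0 < ∫ t in (-1 : ℝ)..1, (1 - t) ^ a * iteratedDeriv 2 (fun s : ℝ => (1 - s ^ 2) ^ p) t := by
  rw [integral_one_sub_rpow_mul_iteratedDeriv_two ha hp]
  refine intervalIntegral_pos_of_pos_on ?_ (fun t ht => ?_) (by norm_num)
  · exact ((intervalIntegrable_one_sub_rpow (by linarith) _ _).const_mul _).mul_continuousOn
      (continuous_one_sub_sq_rpow (by linarith)).continuousOn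
  · have h₁ : 0 < 1 - t := by linarith [ht.2]
    have h₂ : 0 < 1 - t ^ 2 := by nlinarith [ht.1, ht.2]
    have h₃ : 0 < a * (a - 1) := by nlinarith
    positivity

end Calculus

section PointMasses

variable {X : Type*} [PseudoMetricSpace X] [MeasurableSpace X] [OpensMeasurableSpace X]
  {μ : Measure X} [IsFiniteMeasure μ] [μ.IsOpenPosMeasure] {ι : Type*} [Fintype ι]

theorem exists_integral_eq_zero_and_energy_pos {K : X × X → ℝ} (hK : Continuous K)
    (hKi : Integrable K (μ.prod μ)) (P : ι → X) (c : ι → ℝ) (hc : ∑ i, c i = 0)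
    (hQ : 0 < ∑ i, ∑ j, c i * c j * K (P i, P j)) :
    ∃ w : X → ℝ, Integrable w μ ∧ ∫ x, w x ∂μ = 0 ∧
      0 < ∫ z, w z.1 * w z.2 * K z ∂(μ.prod μ) := by
  set F : (ι × ι → X × X) → ℝ := fun z => ∑ i, ∑ j, c i * c j * K (z (i, j))
  have hF : Continuous F := by fun_prop
  obtain ⟨ε, hε, hεF⟩ := Metric.eventually_nhds_iff.1
    ((hF.continuousAt (x := fun ij => (P ij.1, P ij.2))).eventually (lt_mem_nhds hQ))
  set A : ι → Set X := fun i => ball (P i) ε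
  have hA : ∀ i, MeasurableSet (A i) := fun i => measurableSet_ball
  have hA₀ : ∀ i, μ (A i) ≠ 0 := fun i => (measure_ball_pos μ _ hε).ne'
  have hm : ∀ i, 0 < μ.real (A i) := fun i => ENNReal.toReal_pos (hA₀ i) (measure_ne_top _ _)
  set w : X → ℝ := fun x => ∑ i, c i / μ.real (A i) * (A i).indicator 1 x
  have hw : Integrable w μ :=
    integrable_finsetSum _ fun i _ => ((integrable_const 1).indicator (hA i)).const_mul _
  have hAA : ∀ i j, MeasurableSet (A i ×ˢ A j) := fun i j => (hA i).prod (hA j)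
  have hterm : ∀ i j, Integrable (fun z => c i / μ.real (A i) * (c j / μ.real (A j)) *
      (A i ×ˢ A j).indicator K z) (μ.prod μ) := fun i j => (hKi.indicator (hAA i j)).const_mul _
  have hexpand : ∫ z, w z.1 * w z.2 * K z ∂(μ.prod μ)
      = ∑ i, ∑ j, ⨍ z in A i ×ˢ A j, c i * c j * K z ∂(μ.prod μ) := by
    have hpt : ∀ z : X × X, w z.1 * w z.2 * K z = ∑ i, ∑ j,
        c i / μ.real (A i) * (c j / μ.real (A j)) * (A i ×ˢ A j).indicator K z := by
      intro z
      rw [Finset.sum_mul_sum, Finset.sum_mul]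
      refine Finset.sum_congr rfl fun i _ => ?_
      rw [Finset.sum_mul]
      refine Finset.sum_congr rfl fun j _ => ?_
      by_cases hi : z.1 ∈ A i <;> by_cases hj : z.2 ∈ A j <;> simp [hi, hj]
    simp_rw [hpt]
    rw [integral_finsetSum _ fun i _ => integrable_finsetSum _ fun j _ => hterm i j]
    refine Finset.sum_congr rfl fun i _ => ?_
    rw [integral_finsetSum _ fun j _ => hterm i j]
    refine Finset.sum_congr rfl fun j _ => ?_
    rw [integral_const_mul, integral_indicator (hAA i j), setAverage_eq, integral_const_mul,
      measureReal_prod_prod, smul_eq_mul]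
    field_simp [(hm i).ne', (hm j).ne']
  refine ⟨w, hw, ?_, ?_⟩
  · rw [integral_finsetSum _ fun i _ => ((integrable_const 1).indicator (hA i)).const_mul _, ← hc]
    refine Finset.sum_congr rfl fun i _ => ?_
    rw [integral_const_mul, integral_indicator_one (hA i), div_mul_cancel₀ _ (hm i).ne']
  have hmean : ∀ ij : ι × ι, ∃ z ∈ A ij.1 ×ˢ A ij.2, c ij.1 * c ij.2 * K z
      ≤ ⨍ z in A ij.1 ×ˢ A ij.2, c ij.1 * c ij.2 * K z ∂(μ.prod μ) := fun ij =>
    exists_le_setAverage (by rw [Measure.prod_prod]; exact mul_ne_zero (hA₀ _) (hA₀ _))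
      (measure_ne_top _ _) ((hKi.const_mul _).integrableOn)
  choose z hzA hz using hmean
  have hzF : 0 < F z := hεF <| (dist_pi_lt_iff hε).2 fun ij =>
    max_lt (hzA ij).1 (hzA ij).2
  rw [hexpand]
  exact hzF.trans_le (Finset.sum_le_sum fun i _ => Finset.sum_le_sum fun j _ => hz (i, j))

end PointMasses

section FourPoints

variable {E : Type*} [NormedAddCommGroup E] [InnerProductSpace ℝ E]

lemma norm_sub_rpow_eq_of_norm_eq_one {x y : E} (hx : ‖x‖ = 1) (hy : ‖y‖ = 1) (s : ℝ) :
    ‖x - y‖ ^ s = (2 - 2 * ⟪x, y⟫) ^ (s / 2) := by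
  have h : 2 - 2 * ⟪x, y⟫ = ‖x - y‖ ^ (2 : ℝ) := by
    rw [Real.rpow_two, norm_sub_sq_real, hx, hy]; ring
  rw [h, ← Real.rpow_mul (norm_nonneg _)]
  ring_nf

theorem energy_four_points_pos {u v : E} (hu : ‖u‖ = 1) (hv : ‖v‖ = 1) (huv : ⟪u, v⟫ = 0)
    {s : ℝ} (hs : 2 < s) :
    0 < ∑ i, ∑ j, (![1, 1, -1, -1] : Fin 4 → ℝ) i * ![1, 1, -1, -1] j *
      ‖![u, -u, v, -v] i - ![u, -u, v, -v] j‖ ^ s := by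
  have hP : ∀ i, ‖![u, -u, v, -v] i‖ = 1 := by
    intro i; fin_cases i <;> simp [hu, hv]
  simp only [norm_sub_rpow_eq_of_norm_eq_one (hP _) (hP _), Fin.sum_univ_four, Fin.isValue,
    Matrix.cons_val_zero, Matrix.cons_val_one, Matrix.cons_val, real_inner_comm, inner_neg_right,
    inner_self_eq_norm_sq_to_K, Real.ringHom_apply, hu, hv, huv, mul_one, one_mul, mul_neg,
    neg_mul, neg_neg, neg_zero, one_pow, mul_zero, sub_self, sub_zero, add_zero, add_neg_cancel,
    sub_neg_eq_add]
  have hgt : (2 : ℝ) < 2 ^ (s / 2) := by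
    simpa using Real.rpow_lt_rpow_of_exponent_lt (by norm_num : (1 : ℝ) < 2)
      (by linarith : (1 : ℝ) < s / 2)
  have hfour : ((2 : ℝ) + 2) ^ (s / 2) = 2 ^ (s / 2) * 2 ^ (s / 2) := by
    rw [← Real.mul_rpow (by norm_num) (by norm_num)]; norm_num
  rw [hfour, Real.zero_rpow (by linarith)]
  nlinarith

end FourPoints

instance (n : ℕ) : IsFiniteMeasure (sphereMeasure n) := by
  unfold sphereMeasure; infer_instance

instance (n : ℕ) : (sphereMeasure n).IsOpenPosMeasure := by
  unfold sphereMeasure; infer_instance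

lemma sphereArea_pos {n : ℕ} (hn : n ≠ 0) : 0 < sphereArea n := by
  have : NeZero n := ⟨hn⟩
  exact ENNReal.toReal_pos (Measure.measure_univ_ne_zero.2 (Measure.toSphere_ne_zero _))
    (measure_ne_top _ _)

lemma Hfun_ofReal {n : ℕ} (lam : ℝ) (w : sphere (0 : EuclideanSpace ℝ (Fin n)) 1 → ℝ) :
    Hfun lam (fun η => (w η : ℂ)) =
      ∫ z, w z.1 * w z.2 * ‖(z.1 : EuclideanSpace ℝ (Fin n)) - z.2‖ ^ (-lam)
        ∂((sphereMeasure n).prod (sphereMeasure n)) := by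
  simp only [Hfun, Complex.conj_ofReal, ← Complex.ofReal_mul]
  rw [integral_complex_ofReal, Complex.ofReal_re]

lemma Hfun_zero {n : ℕ} (lam : ℝ) :
    Hfun lam (fun _ : sphere (0 : EuclideanSpace ℝ (Fin n)) 1 => 0) = 0 := by
  simp [Hfun]

lemma sphereAvg_ofReal_eq_zero {n : ℕ} {w : sphere (0 : EuclideanSpace ℝ (Fin n)) 1 → ℝ}
    (hw : ∫ η, w η ∂(sphereMeasure n) = 0) : sphereAvg (fun η => (w η : ℂ)) = 0 := by
  simp [sphereAvg, integral_complex_ofReal, hw]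

theorem exists_Hfun_gt_Hfun_sphereAvg {d : ℕ} (hd : 2 ≤ d) {lam : ℝ} (hlam : lam < -2) :
    ∃ g : sphere (0 : EuclideanSpace ℝ (Fin d)) 1 → ℂ, Integrable g (sphereMeasure d) ∧
      Hfun lam g >
        Hfun lam (fun _ : sphere (0 : EuclideanSpace ℝ (Fin d)) 1 => sphereAvg g) := by
  set K : sphere (0 : EuclideanSpace ℝ (Fin d)) 1 × sphere (0 : EuclideanSpace ℝ (Fin d)) 1 → ℝ :=
    fun z => ‖(z.1 : EuclideanSpace ℝ (Fin d)) - z.2‖ ^ (-lam)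
  have hK : Continuous K := by fun_prop (disch := linarith)
  have hKi : Integrable K ((sphereMeasure d).prod (sphereMeasure d)) :=
    hK.integrable_of_hasCompactSupport (HasCompactSupport.of_compactSpace K)
  set u : EuclideanSpace ℝ (Fin d) := EuclideanSpace.single ⟨0, by omega⟩ 1
  set v : EuclideanSpace ℝ (Fin d) := EuclideanSpace.single ⟨1, by omega⟩ 1
  have hu : ‖u‖ = 1 := by simp [u]
  have hv : ‖v‖ = 1 := by simp [v]
  have huv : ⟪u, v⟫ = 0 := by simp [u, v, EuclideanSpace.inner_single_left]
  have hP : ∀ i, ![u, -u, v, -v] i ∈ sphere (0 : EuclideanSpace ℝ (Fin d)) 1 := by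
    intro i; fin_cases i <;> simp [hu, hv]
  obtain ⟨w, hw, hw₀, hpos⟩ := exists_integral_eq_zero_and_energy_pos hK hKi
    (fun i => ⟨_, hP i⟩) ![1, 1, -1, -1] (by simp [Fin.sum_univ_four])
    (energy_four_points_pos hu hv huv (by linarith))
  refine ⟨fun η => w η, hw.ofReal, ?_⟩
  rw [sphereAvg_ofReal_eq_zero hw₀, Hfun_zero, Hfun_ofReal]
  exact hpos

/-- for `d ≥ 3` and `λ < −2` one has `I₂(d,λ) > 0` (stated via the explicit
integral and via the Rodrigues formula
`(1−t²)^{(d−3)/2} P_{2,d}(t) = R_{2,d} ∂² (1−t²)^{2+(d−3)/2}`,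
`R_{2,d} = Γ((d−1)/2)/(2² Γ(2+(d−1)/2)) > 0`); in particular the bound
`H_λ(g) ≤ H_λ(μ_g 𝟏)` of Proposition 2.2 fails for `λ < −2`. -/
theorem statement15 (d : ℕ) (hd : 3 ≤ d) (lam : ℝ) (hlam : lam < -2) :
    (∫ t in (-1 : ℝ)..1, (1 - t) ^ (-lam / 2) *
        iteratedDeriv 2 (fun s : ℝ => (1 - s ^ 2) ^ ((2 : ℝ) + ((d : ℝ) - 3) / 2)) t) > 0 ∧
      sphereArea (d - 1) *
        ((Real.Gamma (((d : ℝ) - 1) / 2) / (2 ^ 2 * Real.Gamma (2 + ((d : ℝ) - 1) / 2))) *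
          ∫ t in (-1 : ℝ)..1, (1 - t) ^ (-lam / 2) *
            iteratedDeriv 2 (fun s : ℝ => (1 - s ^ 2) ^ ((2 : ℝ) + ((d : ℝ) - 3) / 2)) t) > 0 ∧
      ∃ g : Metric.sphere (0 : EuclideanSpace ℝ (Fin d)) 1 → ℂ,
        Integrable g (sphereMeasure d) ∧
          Hfun lam g >
            Hfun lam (fun _ : Metric.sphere (0 : EuclideanSpace ℝ (Fin d)) 1 => sphereAvg g) := by
  have hd' : (3 : ℝ) ≤ d := by exact_mod_cast hd
  have hI := integral_one_sub_rpow_mul_iteratedDeriv_two_pos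
    (a := -lam / 2) (p := 2 + ((d : ℝ) - 3) / 2) (by linarith) (by linarith)
  refine ⟨hI, ?_, exists_Hfun_gt_Hfun_sphereAvg (by omega) hlam⟩
  have hR : 0 < Real.Gamma (((d : ℝ) - 1) / 2) / (2 ^ 2 * Real.Gamma (2 + ((d : ℝ) - 1) / 2)) :=
    div_pos (Real.Gamma_pos_of_pos (by linarith))
      (mul_pos (by norm_num) (Real.Gamma_pos_of_pos (by linarith)))
  exact mul_pos (sphereArea_pos (by omega)) (mul_pos hR hI)
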